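/- arXiv:1605.00348 — 6 statements merged into one kernel-verified Lean document; each statement's English description precedes it below -/
import Mathlib

section
/- E_M is an upper bound-comparison with E_W: for any bipartite state ρ, E_M(ρ) ≤ E_W(ρ), where E_M(ρ) = -log min { ‖R^{T_B}‖_∞ : R ≥ P } with P the support projection of ρ, and E_W(ρ) = log max { tr(ρ R) : R ≥ 0, -I ≤ R^{T_B} ≤ I }. -/
open scoped Matrix ComplexOrder

/-- Partial transpose on the second tensor factor. -/
def pt {α β : Type*} (M : Matrix (α × β) (α × β) ℂ) : Matrix (α × β) (α × β) ℂ :=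
  fun p q => M (p.1, q.2) (q.1, p.2)

open scoped Classical in
/-- Trace norm of a Hermitian matrix: sum of absolute values of eigenvalues
(and `0` on non-Hermitian matrices). -/
noncomputable def traceNorm {n : Type*} [Fintype n] [DecidableEq n]
    (M : Matrix n n ℂ) : ℝ :=
  if h : M.IsHermitian then ∑ i, |h.eigenvalues i| else 0

open scoped Classical in
/-- Operator norm of a Hermitian matrix: maximum absolute value of eigenvalues
(and `0` on non-Hermitian matrices). -/
noncomputable def opNorm {n : Type*} [Fintype n] [DecidableEq n]
    (M : Matrix n n ℂ) : ℝ :=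
  if h : M.IsHermitian then ⨆ i, |h.eigenvalues i| else 0

/-!
Let `s` be the maximum defining `E_W(ρ)`. If `R ≥ P` and `c = ‖R^{T_B}‖_∞`, then `R / c` is
feasible for `E_W`, and `tr(ρ R) ≥ tr(ρ P) = 1` because `ρ ≥ 0`; hence `1 / c ≤ s`.
Minimising over `R` gives `s⁻¹ ≤ min ‖R^{T_B}‖_∞`, i.e. `E_M(ρ) ≤ E_W(ρ)`.
-/

namespace Matrix

variable {n 𝕜 : Type*} [Fintype n] [DecidableEq n] [RCLike 𝕜]

open scoped MatrixOrder in
lemma IsHermitian.posSemidef_smul_one_sub {A : Matrix n n 𝕜} (hA : A.IsHermitian) {c : ℝ}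
    (hc : ∀ i, hA.eigenvalues i ≤ c) : ((c : 𝕜) • 1 - A).PosSemidef := by
  have : A ≤ algebraMap ℝ _ c := by
    rw [le_algebraMap_iff_spectrum_le hA.isSelfAdjoint, hA.spectrum_real_eq_range_eigenvalues]
    rintro _ ⟨i, rfl⟩
    exact hc i
  rwa [le_iff, Algebra.algebraMap_eq_smul_one, RCLike.real_smul_eq_coe_smul (K := 𝕜)] at this

open scoped MatrixOrder in
lemma IsHermitian.posSemidef_sub_smul_one {A : Matrix n n 𝕜} (hA : A.IsHermitian) {c : ℝ}
    (hc : ∀ i, c ≤ hA.eigenvalues i) : (A - (c : 𝕜) • 1).PosSemidef := by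
  have : algebraMap ℝ _ c ≤ A := by
    rw [algebraMap_le_iff_le_spectrum hA.isSelfAdjoint, hA.spectrum_real_eq_range_eigenvalues]
    rintro _ ⟨i, rfl⟩
    exact hc i
  rwa [le_iff, Algebra.algebraMap_eq_smul_one, RCLike.real_smul_eq_coe_smul (K := 𝕜)] at this

lemma PosSemidef.posSemidef_smul_one_sub_of_trace_eq {A : Matrix n n 𝕜} (hA : A.PosSemidef)
    {c : ℝ} (hc : A.trace = c) : ((c : 𝕜) • 1 - A).PosSemidef := by
  have hsum : ∑ i, hA.isHermitian.eigenvalues i = c := by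
    rw [hA.isHermitian.trace_eq_sum_eigenvalues, ← RCLike.ofReal_sum] at hc
    exact_mod_cast hc
  refine hA.isHermitian.posSemidef_smul_one_sub fun i => hsum ▸ ?_
  exact Finset.single_le_sum (fun j _ => hA.eigenvalues_nonneg j) (Finset.mem_univ i)

lemma PosSemidef.trace_mul_nonneg {A B : Matrix n n 𝕜} (hA : A.PosSemidef) (hB : B.PosSemidef) :
    0 ≤ (A * B).trace := by
  open scoped MatrixOrder in
  obtain ⟨C, rfl⟩ := CStarAlgebra.nonneg_iff_eq_star_mul_self.mp hB.nonneg
  rw [← mul_assoc, trace_mul_cycle]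
  exact (hA.mul_mul_conjTranspose_same C).trace_nonneg

lemma mul_eq_self_of_range_le {P A : Matrix n n 𝕜} (hP : IsIdempotentElem P)
    (h : LinearMap.range A.mulVecLin ≤ LinearMap.range P.mulVecLin) : P * A = A := by
  refine toLin'.injective (LinearMap.ext fun v => ?_)
  obtain ⟨u, hu⟩ := h ⟨v, rfl⟩
  simp only [mulVecLin_apply] at hu
  rw [toLin'_mul, LinearMap.comp_apply, toLin'_apply, toLin'_apply, ← hu, mulVec_mulVec, hP.eq]

end Matrix

section PartialTranspose

variable {α β : Type*}

@[simp]
lemma pt_pt (M : Matrix (α × β) (α × β) ℂ) : pt (pt M) = M := rfl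

lemma pt_smul (c : ℂ) (M : Matrix (α × β) (α × β) ℂ) : pt (c • M) = c • pt M := rfl

lemma pt_ne_zero {M : Matrix (α × β) (α × β) ℂ} (hM : M ≠ 0) : pt M ≠ 0 :=
  fun h => hM (by rw [← pt_pt M, h]; rfl)

lemma trace_pt [Fintype α] [Fintype β] (M : Matrix (α × β) (α × β) ℂ) :
    (pt M).trace = M.trace := rfl

lemma pt_one [DecidableEq α] [DecidableEq β] : pt (1 : Matrix (α × β) (α × β) ℂ) = 1 := by
  ext p q
  by_cases h1 : p.1 = q.1 <;> by_cases h2 : p.2 = q.2 <;>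
    simp [pt, Matrix.one_apply, Prod.ext_iff, h1, h2, eq_comm]

lemma Matrix.IsHermitian.pt {M : Matrix (α × β) (α × β) ℂ} (hM : M.IsHermitian) :
    (_root_.pt M).IsHermitian := by
  ext p q
  exact hM.apply (p.1, q.2) (q.1, p.2)

end PartialTranspose

section OperatorNorm

variable {n : Type*} [Fintype n] [DecidableEq n] {A : Matrix n n ℂ}

lemma abs_eigenvalues_le_opNorm (hA : A.IsHermitian) (i : n) :
    |hA.eigenvalues i| ≤ opNorm A := by
  rw [opNorm, dif_pos hA]
  exact le_ciSup (f := fun i => |hA.eigenvalues i|) (Set.finite_range _).bddAbove i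

lemma opNorm_pos (hA : A.IsHermitian) (h : A ≠ 0) : 0 < opNorm A := by
  obtain ⟨i, hi⟩ := Function.ne_iff.mp (hA.eigenvalues_eq_zero_iff.not.mpr h)
  exact (abs_pos.mpr hi).trans_le (abs_eigenvalues_le_opNorm hA i)

lemma posSemidef_opNorm_smul_one_sub (hA : A.IsHermitian) :
    ((opNorm A : ℂ) • 1 - A).PosSemidef :=
  hA.posSemidef_smul_one_sub fun i => (le_abs_self _).trans (abs_eigenvalues_le_opNorm hA i)

lemma posSemidef_opNorm_smul_one_add (hA : A.IsHermitian) :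
    ((opNorm A : ℂ) • 1 + A).PosSemidef := by
  have := hA.posSemidef_sub_smul_one (c := -opNorm A) fun i =>
    neg_le_of_abs_le (abs_eigenvalues_le_opNorm hA i)
  rwa [RCLike.ofReal_neg, neg_smul, sub_neg_eq_add, add_comm] at this

end OperatorNorm

section Comparison

variable {α β : Type*} [Fintype α] [Fintype β] [DecidableEq α] [DecidableEq β]

/-- The values `tr(ρ R)` maximised in `E_W(ρ)`. -/
def ewValues (ρ : Matrix (α × β) (α × β) ℂ) : Set ℝ :=
  {x | ∃ R : Matrix (α × β) (α × β) ℂ,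
    R.PosSemidef ∧ (1 - pt R).PosSemidef ∧ (1 + pt R).PosSemidef ∧ x = ((ρ * R).trace).re}

/-- The values `‖R^{T_B}‖_∞` minimised in `E_M(ρ)`, for `P` the support projection. -/
def emValues (P : Matrix (α × β) (α × β) ℂ) : Set ℝ :=
  {x | ∃ R : Matrix (α × β) (α × β) ℂ,
    R.IsHermitian ∧ (R - P).PosSemidef ∧ x = opNorm (pt R)}

variable {ρ P : Matrix (α × β) (α × β) ℂ}

lemma one_mem_ewValues (hρ : ρ.trace = 1) : (1 : ℝ) ∈ ewValues ρ := by
  refine ⟨1, .one, ?_, ?_, by rw [mul_one, hρ, Complex.one_re]⟩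
  · rw [pt_one, sub_self]
    exact .zero
  · rw [pt_one]
    exact Matrix.PosSemidef.one.add .one

lemma le_card_of_mem_ewValues (hρ : ρ.PosSemidef) (hρtr : ρ.trace = 1) {x : ℝ}
    (hx : x ∈ ewValues ρ) : x ≤ Fintype.card (α × β) := by
  obtain ⟨R, hR, hR₁, -, rfl⟩ := hx
  have hρ₁ : (1 - ρ).PosSemidef := by
    simpa using hρ.posSemidef_smul_one_sub_of_trace_eq (c := 1) (by simp [hρtr])
  have hle : (ρ * R).trace ≤ R.trace := by
    simpa [sub_mul, Matrix.trace_sub] using hρ₁.trace_mul_nonneg hR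
  have htr : R.trace ≤ Fintype.card (α × β) := by
    simpa [Matrix.trace_sub, trace_pt] using hR₁.trace_nonneg
  exact_mod_cast (Complex.le_def.mp (hle.trans htr)).1

lemma bddAbove_ewValues (hρ : ρ.PosSemidef) (hρtr : ρ.trace = 1) : BddAbove (ewValues ρ) :=
  ⟨_, fun _ => le_card_of_mem_ewValues hρ hρtr⟩

lemma emValues_nonempty (hP : P.IsHermitian) : (emValues P).Nonempty :=
  ⟨_, P, hP, by rw [sub_self]; exact .zero, rfl⟩

lemma inv_opNorm_mul_mem_ewValues {R : Matrix (α × β) (α × β) ℂ} (hR : R.PosSemidef)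
    (hc : 0 < opNorm (pt R)) :
    (opNorm (pt R))⁻¹ * ((ρ * R).trace).re ∈ ewValues ρ := by
  set c := opNorm (pt R)
  have hc' : (0 : ℂ) ≤ ((c⁻¹ : ℝ) : ℂ) := Complex.zero_le_real.mpr (inv_nonneg.mpr hc.le)
  have hscale (M : Matrix (α × β) (α × β) ℂ) :
      ((c⁻¹ : ℝ) : ℂ) • ((c : ℂ) • M) = M := by
    rw [smul_smul, ← Complex.ofReal_mul, inv_mul_cancel₀ hc.ne', Complex.ofReal_one,
      one_smul]
  refine ⟨((c⁻¹ : ℝ) : ℂ) • R, hR.smul hc', ?_, ?_, ?_⟩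
  · rw [pt_smul, ← hscale 1, ← smul_sub]
    exact (posSemidef_opNorm_smul_one_sub hR.isHermitian.pt).smul hc'
  · rw [pt_smul, ← hscale 1, ← smul_add]
    exact (posSemidef_opNorm_smul_one_add hR.isHermitian.pt).smul hc'
  · rw [mul_smul_comm, Matrix.trace_smul, smul_eq_mul, Complex.re_ofReal_mul]

lemma one_le_re_trace_mul (hρ : ρ.PosSemidef) (hρP : (ρ * P).trace = 1)
    {R : Matrix (α × β) (α × β) ℂ} (hRP : (R - P).PosSemidef) :
    1 ≤ ((ρ * R).trace).re := by
  have h := (Complex.le_def.mp (hρ.trace_mul_nonneg hRP)).1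
  rw [mul_sub, Matrix.trace_sub, hρP, Complex.sub_re, Complex.one_re, Complex.zero_re] at h
  linarith

lemma inv_sSup_ewValues_le (hρ : ρ.PosSemidef) (hP : P.PosSemidef) (hρP : (ρ * P).trace = 1)
    (hbdd : BddAbove (ewValues ρ)) {x : ℝ} (hx : x ∈ emValues P) :
    (sSup (ewValues ρ))⁻¹ ≤ x := by
  obtain ⟨R, hRh, hRP, rfl⟩ := hx
  have hR : R.PosSemidef := by simpa using hP.add hRP
  have htr := one_le_re_trace_mul hρ hρP hRP
  have hR0 : R ≠ 0 := by
    rintro rfl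
    norm_num at htr
  have hc := opNorm_pos hRh.pt (pt_ne_zero hR0)
  refine inv_le_of_inv_le₀ hc ?_
  calc (opNorm (pt R))⁻¹ ≤ (opNorm (pt R))⁻¹ * ((ρ * R).trace).re :=
        le_mul_of_one_le_right (inv_nonneg.mpr hc.le) htr
    _ ≤ sSup (ewValues ρ) := le_csSup hbdd (inv_opNorm_mul_mem_ewValues hR hc)

end Comparison

/-- `E_M(ρ) ≤ E_W(ρ)`, where
`E_M(ρ) = -log min { ‖R^{T_B}‖_∞ : R Hermitian, R ≥ P }` (`P` the support
projection of `ρ`) and `E_W(ρ) = log max { tr(ρ R) : R ≥ 0, -I ≤ R^{T_B} ≤ I }`. -/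
theorem statement5 {a b : ℕ}
    (ρ P : Matrix (Fin a × Fin b) (Fin a × Fin b) ℂ)
    (hρ : ρ.PosSemidef) (hρtr : ρ.trace = 1)
    (hP : P.IsHermitian) (hPproj : P * P = P)
    (hsupp : LinearMap.range P.mulVecLin = LinearMap.range ρ.mulVecLin) :
    -Real.log (sInf {x : ℝ | ∃ R : Matrix (Fin a × Fin b) (Fin a × Fin b) ℂ,
        R.IsHermitian ∧ (R - P).PosSemidef ∧ x = opNorm (pt R)}) ≤
    Real.log (sSup {x : ℝ | ∃ R : Matrix (Fin a × Fin b) (Fin a × Fin b) ℂ,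
        R.PosSemidef ∧ (1 - pt R).PosSemidef ∧ (1 + pt R).PosSemidef ∧
        x = ((ρ * R).trace).re}) := by
  change -Real.log (sInf (emValues P)) ≤ Real.log (sSup (ewValues ρ))
  have hPpsd : P.PosSemidef := by
    simpa only [hP.eq, hPproj] using Matrix.posSemidef_conjTranspose_mul_self P
  have hρP : (ρ * P).trace = 1 := by
    rw [Matrix.trace_mul_comm, Matrix.mul_eq_self_of_range_le hPproj hsupp.ge, hρtr]
  have hbdd := bddAbove_ewValues hρ hρtr
  have hs : 0 < sSup (ewValues ρ) := one_pos.trans_le (le_csSup hbdd (one_mem_ewValues hρtr))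
  have hm : (sSup (ewValues ρ))⁻¹ ≤ sInf (emValues P) :=
    le_csInf (emValues_nonempty hP) fun _ => inv_sSup_ewValues_le hρ hPpsd hρP hbdd
  calc -Real.log (sInf (emValues P)) ≤ -Real.log (sSup (ewValues ρ))⁻¹ :=
        neg_le_neg (Real.log_le_log (inv_pos.mpr hs) hm)
    _ = Real.log (sSup (ewValues ρ)) := by rw [Real.log_inv, neg_neg]
end

section
/- The quantity M is multiplicative in the dual formulation: for orthogonal projections P on A⊗B and Q on A'⊗B', min { ‖R^{T_{BB'}}‖_∞ : R ≥ P ⊗ Q } ≤ (min { ‖R₁^{T_B}‖_∞ : R₁ ≥ P }) · (min { ‖R₂^{T_{B'}}‖_∞ : R₂ ≥ Q }). Consequently E_M(ρ ⊗ σ) ≥ E_M(ρ) + E_M(σ). -/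
open scoped Matrix ComplexOrder

/-- Tensor product of bipartite matrices, with the bipartite structure
`(A ⊗ A') ⊗ (B ⊗ B')` on the result. -/
def tens {a b c d : Type*}
    (R₁ : Matrix (a × b) (a × b) ℂ) (R₂ : Matrix (c × d) (c × d) ℂ) :
    Matrix ((a × c) × (b × d)) ((a × c) × (b × d)) ℂ :=
  fun p q => R₁ (p.1.1, p.2.1) (q.1.1, q.2.1) * R₂ (p.1.2, p.2.2) (q.1.2, q.2.2)

/-! If `R₁ ≥ P` and `R₂ ≥ Q`, then `R₁ ⊗ R₂ - P ⊗ Q = (R₁ - P) ⊗ R₂ + P ⊗ (R₂ - Q) ≥ 0`, so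
`R₁ ⊗ R₂` is feasible for `P ⊗ Q`. Its partial transpose is `R₁^{T_B} ⊗ R₂^{T_B'}`, and the
operator norm is submultiplicative on tensor products, so taking infima gives the product bound.
All three infima are positive, since `‖R^{T_B}‖_∞` dominates the diagonal of `R ≥ P` and a nonzero
projection has a positive diagonal entry; the logarithm then turns the bound into superadditivity
of `E_M`. -/

open Matrix Unitary

section Spectral

variable {n : Type*} [Fintype n] [DecidableEq n] {M : Matrix n n ℂ}

theorem Matrix.IsHermitian.posSemidef_smul_one_add_smul_iff (h : M.IsHermitian) (t s : ℝ) :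
    ((t : ℂ) • (1 : Matrix n n ℂ) + (s : ℂ) • M).PosSemidef ↔
      ∀ i, 0 ≤ t + s * h.eigenvalues i := by
  have hdiag : (t : ℂ) • (1 : Matrix n n ℂ) + (s : ℂ) • M =
      conjStarAlgAut ℂ _ h.eigenvectorUnitary
        (diagonal fun i => ((t + s * h.eigenvalues i : ℝ) : ℂ)) := by
    conv_lhs => rw [h.spectral_theorem]
    rw [← map_one (conjStarAlgAut ℂ _ h.eigenvectorUnitary), ← map_smul, ← map_smul, ← map_add]
    congr 1
    ext i j
    rcases eq_or_ne i j with rfl | hij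
    · simp
    · simp [hij]
  rw [hdiag, conjStarAlgAut_apply, isUnit_coe.posSemidef_star_right_conjugate_iff,
    posSemidef_diagonal_iff]
  simp only [Complex.zero_le_real]

theorem opNorm_nonneg (M : Matrix n n ℂ) : 0 ≤ opNorm M := by
  unfold opNorm
  split_ifs
  exacts [Real.iSup_nonneg fun i => abs_nonneg _, le_rfl]

theorem Matrix.IsHermitian.opNorm_eq (h : M.IsHermitian) :
    opNorm M = ⨆ i, |h.eigenvalues i| :=
  dif_pos h

theorem Matrix.IsHermitian.opNorm_le_iff (h : M.IsHermitian) {t : ℝ} (ht : 0 ≤ t) :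
    opNorm M ≤ t ↔
      ((t : ℂ) • (1 : Matrix n n ℂ) - M).PosSemidef ∧
        ((t : ℂ) • (1 : Matrix n n ℂ) + M).PosSemidef := by
  have hsub : (t : ℂ) • (1 : Matrix n n ℂ) - M = (t : ℂ) • 1 + ((-1 : ℝ) : ℂ) • M := by
    simp [sub_eq_add_neg]
  have hadd : (t : ℂ) • (1 : Matrix n n ℂ) + M = (t : ℂ) • 1 + ((1 : ℝ) : ℂ) • M := by simp
  rw [hsub, hadd, h.posSemidef_smul_one_add_smul_iff, h.posSemidef_smul_one_add_smul_iff,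
    ← forall_and, h.opNorm_eq]
  refine ⟨fun hle i => ?_, fun hall => Real.iSup_le (fun i => ?_) ht⟩
  · have hi := (le_ciSup (Set.finite_range _).bddAbove i).trans hle
    constructor <;> linarith [abs_le.mp hi]
  · rw [abs_le]
    constructor <;> linarith [hall i]

theorem Matrix.IsHermitian.re_apply_self_le_opNorm (h : M.IsHermitian) (i : n) :
    (M i i).re ≤ opNorm M := by
  have hdiag := ((h.opNorm_le_iff (opNorm_nonneg M)).mp le_rfl).1.diag_nonneg (i := i)
  simpa using (Complex.le_def.mp hdiag).1

end Spectral

section Tensor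

open scoped Kronecker

variable {a b c d : Type*}

theorem tens_eq_kronecker_submatrix (R₁ : Matrix (a × b) (a × b) ℂ)
    (R₂ : Matrix (c × d) (c × d) ℂ) :
    tens R₁ R₂ = (R₁ ⊗ₖ R₂).submatrix (Equiv.prodProdProdComm a c b d)
      (Equiv.prodProdProdComm a c b d) :=
  rfl

theorem pt_tens (R₁ : Matrix (a × b) (a × b) ℂ) (R₂ : Matrix (c × d) (c × d) ℂ) :
    pt (tens R₁ R₂) = tens (pt R₁) (pt R₂) :=
  rfl

theorem tens_sub_tens (R₁ P : Matrix (a × b) (a × b) ℂ)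
    (R₂ Q : Matrix (c × d) (c × d) ℂ) :
    tens R₁ R₂ - tens P Q = tens (R₁ - P) R₂ + tens P (R₂ - Q) := by
  ext p q
  simp only [tens, Matrix.sub_apply, Matrix.add_apply]
  ring

theorem tens_ne_zero {P : Matrix (a × b) (a × b) ℂ} {Q : Matrix (c × d) (c × d) ℂ}
    (hP : P ≠ 0) (hQ : Q ≠ 0) : tens P Q ≠ 0 := by
  obtain ⟨i, j, hij⟩ : ∃ i j, P i j ≠ 0 := by
    by_contra! h
    exact hP (Matrix.ext h)
  obtain ⟨k, l, hkl⟩ : ∃ k l, Q k l ≠ 0 := by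
    by_contra! h
    exact hQ (Matrix.ext h)
  intro h
  exact mul_ne_zero hij hkl
    (congrFun (congrFun h ((i.1, k.1), (i.2, k.2))) ((j.1, l.1), (j.2, l.2)))

theorem isHermitian_pt {R : Matrix (a × b) (a × b) ℂ} (h : R.IsHermitian) :
    (pt R).IsHermitian := by
  ext p q
  simpa [pt] using (congrArg star (h.apply (q.1, p.2) (p.1, q.2))).symm

theorem isHermitian_tens {R₁ : Matrix (a × b) (a × b) ℂ} {R₂ : Matrix (c × d) (c × d) ℂ}
    (h₁ : R₁.IsHermitian) (h₂ : R₂.IsHermitian) : (tens R₁ R₂).IsHermitian := by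
  rw [tens_eq_kronecker_submatrix]
  refine IsHermitian.submatrix ?_ _
  rw [IsHermitian, conjTranspose_kronecker, h₁.eq, h₂.eq]

theorem tens_one_one [DecidableEq a] [DecidableEq b] [DecidableEq c] [DecidableEq d] :
    tens (1 : Matrix (a × b) (a × b) ℂ) (1 : Matrix (c × d) (c × d) ℂ) = 1 := by
  rw [tens_eq_kronecker_submatrix, one_kronecker_one, submatrix_one_equiv]

variable [Fintype a] [Fintype b] [Fintype c] [Fintype d]

theorem posSemidef_tens {R₁ : Matrix (a × b) (a × b) ℂ} {R₂ : Matrix (c × d) (c × d) ℂ}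
    (h₁ : R₁.PosSemidef) (h₂ : R₂.PosSemidef) : (tens R₁ R₂).PosSemidef := by
  rw [tens_eq_kronecker_submatrix]
  exact (h₁.kronecker h₂).submatrix _

variable [DecidableEq a] [DecidableEq b] [DecidableEq c] [DecidableEq d]

theorem opNorm_tens_le {A : Matrix (a × b) (a × b) ℂ} {B : Matrix (c × d) (c × d) ℂ}
    (hA : A.IsHermitian) (hB : B.IsHermitian) :
    opNorm (tens A B) ≤ opNorm A * opNorm B := by
  set s := opNorm A
  set t := opNorm B
  obtain ⟨hA_sub, hA_add⟩ := (hA.opNorm_le_iff (opNorm_nonneg A)).mp le_rfl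
  obtain ⟨hB_sub, hB_add⟩ := (hB.opNorm_le_iff (opNorm_nonneg B)).mp le_rfl
  rw [(isHermitian_tens hA hB).opNorm_le_iff (mul_nonneg (opNorm_nonneg A) (opNorm_nonneg B))]
  -- `st + ε A ⊗ B` is half the sum of `(s + ε A) ⊗ (t + B)` and `(s - ε A) ⊗ (t - B)`.
  have hsplit : ∀ ε : ℂ,
      ((s * t : ℝ) : ℂ) • (1 : Matrix ((a × c) × (b × d)) _ ℂ) + ε • tens A B =
      ((1 / 2 : ℝ) : ℂ) • (tens ((s : ℂ) • 1 + ε • A) ((t : ℂ) • 1 + B) +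
        tens ((s : ℂ) • 1 - ε • A) ((t : ℂ) • 1 - B)) := by
    intro ε
    rw [← tens_one_one]
    ext p q
    simp only [tens, Matrix.add_apply, Matrix.sub_apply, Matrix.smul_apply, smul_eq_mul]
    push_cast
    ring
  have half_nonneg : (0 : ℂ) ≤ ((1 / 2 : ℝ) : ℂ) :=
    Complex.zero_le_real.mpr (by norm_num)
  constructor
  · have := hsplit (-1)
    simp only [neg_one_smul, ← sub_eq_add_neg, sub_neg_eq_add] at this
    rw [this]
    exact ((posSemidef_tens hA_sub hB_add).add (posSemidef_tens hA_add hB_sub)).smul half_nonneg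
  · have := hsplit 1
    simp only [one_smul] at this
    rw [this]
    exact ((posSemidef_tens hA_add hB_add).add (posSemidef_tens hA_sub hB_sub)).smul half_nonneg

end Tensor

theorem le_sInf_mul_sInf {s t : Set ℝ} {c : ℝ} (hs : s.Nonempty) (ht : t.Nonempty)
    (hs₀ : ∀ x ∈ s, 0 ≤ x) (ht₀ : ∀ y ∈ t, 0 ≤ y)
    (h : ∀ x ∈ s, ∀ y ∈ t, c ≤ x * y) :
    c ≤ sInf s * sInf t := by
  have hle : ∀ y ∈ t, c ≤ sInf s * y := by
    intro y hy
    rw [mul_comm, ← smul_eq_mul, ← Real.sInf_smul_of_nonneg (ht₀ y hy)]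
    refine le_csInf hs.smul_set ?_
    rintro _ ⟨x, hx, rfl⟩
    exact (mul_comm x y).subst (h x hx y hy)
  rw [← smul_eq_mul, ← Real.sInf_smul_of_nonneg (Real.sInf_nonneg hs₀)]
  refine le_csInf ht.smul_set ?_
  rintro _ ⟨y, hy, rfl⟩
  exact hle y hy

section Projection

variable {n : Type*} [Fintype n]

theorem Matrix.PosSemidef.exists_pos_apply_self {P : Matrix n n ℂ} (hP : P.PosSemidef)
    (hP₀ : P ≠ 0) : ∃ i, 0 < P i i := by
  obtain ⟨i, -, hi⟩ := Finset.exists_ne_zero_of_sum_ne_zero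
    (mt hP.trace_eq_zero_iff.mp hP₀)
  exact ⟨i, hP.diag_nonneg.lt_of_ne' hi⟩

theorem Matrix.IsHermitian.posSemidef_of_mul_self_eq {P : Matrix n n ℂ} (hP : P.IsHermitian)
    (hPP : P * P = P) : P.PosSemidef := by
  simpa [hP.eq, hPP] using posSemidef_conjTranspose_mul_self P

theorem ne_zero_of_range_mulVecLin_eq {ρ P : Matrix n n ℂ} (hρ : ρ.trace = 1)
    (hsupp : LinearMap.range P.mulVecLin = LinearMap.range ρ.mulVecLin) : P ≠ 0 := by
  rintro rfl
  rw [mulVecLin_zero, LinearMap.range_zero, eq_comm, LinearMap.range_eq_bot] at hsupp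
  have hρ₀ : ρ = 0 := by
    classical
    ext i j
    simpa using congrFun (LinearMap.congr_fun hsupp (Pi.single j 1)) i
  simp [hρ₀] at hρ

end Projection

section DualValues

variable {α β : Type*} [Fintype α] [Fintype β] [DecidableEq α] [DecidableEq β]

/-- `{‖R^{T_B}‖_∞ : R ≥ P}`, so that `E_M(ρ) = -log sInf (dualValues P_ρ)`. -/
def dualValues (P : Matrix (α × β) (α × β) ℂ) : Set ℝ :=
  {x | ∃ R, R.IsHermitian ∧ (R - P).PosSemidef ∧ x = opNorm (pt R)}

variable {P : Matrix (α × β) (α × β) ℂ} {x : ℝ}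

theorem dualValues_nonempty (hP : P.IsHermitian) : (dualValues P).Nonempty :=
  ⟨_, P, hP, by simpa using PosSemidef.zero, rfl⟩

theorem nonneg_of_mem_dualValues (hx : x ∈ dualValues P) : 0 ≤ x := by
  obtain ⟨R, -, -, rfl⟩ := hx
  exact opNorm_nonneg _

theorem re_apply_self_le_of_mem_dualValues (hx : x ∈ dualValues P) (p : α × β) :
    (P p p).re ≤ x := by
  obtain ⟨R, hR, hRP, rfl⟩ := hx
  have hle : (P p p).re ≤ (R p p).re := by
    simpa using (Complex.le_def.mp hRP.diag_nonneg).1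
  -- `R` and `pt R` have the same diagonal.
  exact hle.trans ((isHermitian_pt hR).re_apply_self_le_opNorm p)

theorem sInf_dualValues_pos (hP : P.PosSemidef) (hP₀ : P ≠ 0) : 0 < sInf (dualValues P) := by
  obtain ⟨p, hp⟩ := hP.exists_pos_apply_self hP₀
  exact (Complex.pos_iff.mp hp).1.trans_le <| le_csInf (dualValues_nonempty hP.isHermitian)
    fun _ hx => re_apply_self_le_of_mem_dualValues hx p

theorem sInf_dualValues_tens_le {γ δ : Type*} [Fintype γ] [Fintype δ] [DecidableEq γ]
    [DecidableEq δ] {Q : Matrix (γ × δ) (γ × δ) ℂ} (hP : P.PosSemidef)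
    (hQ : Q.PosSemidef) :
    sInf (dualValues (tens P Q)) ≤ sInf (dualValues P) * sInf (dualValues Q) := by
  refine le_sInf_mul_sInf (dualValues_nonempty hP.isHermitian)
    (dualValues_nonempty hQ.isHermitian) (fun _ => nonneg_of_mem_dualValues)
    (fun _ => nonneg_of_mem_dualValues) ?_
  rintro _ ⟨R₁, hR₁, hR₁P, rfl⟩ _ ⟨R₂, hR₂, hR₂Q, rfl⟩
  have hR₂_psd : R₂.PosSemidef := by simpa using hR₂Q.add hQ
  have hfeasible : (tens R₁ R₂ - tens P Q).PosSemidef := by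
    rw [tens_sub_tens]
    exact (posSemidef_tens hR₁P hR₂_psd).add (posSemidef_tens hP hR₂Q)
  calc sInf (dualValues (tens P Q)) ≤ opNorm (pt (tens R₁ R₂)) :=
        csInf_le ⟨0, fun _ => nonneg_of_mem_dualValues⟩
          ⟨_, isHermitian_tens hR₁ hR₂, hfeasible, rfl⟩
    _ = opNorm (tens (pt R₁) (pt R₂)) := by rw [pt_tens]
    _ ≤ opNorm (pt R₁) * opNorm (pt R₂) :=
        opNorm_tens_le (isHermitian_pt hR₁) (isHermitian_pt hR₂)

end DualValues

theorem statement6_general {a b c d : ℕ}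
    (ρ P : Matrix (Fin a × Fin b) (Fin a × Fin b) ℂ)
    (σ Q : Matrix (Fin c × Fin d) (Fin c × Fin d) ℂ)
    (hρtr : ρ.trace = 1)
    (hσtr : σ.trace = 1)
    (hP : P.IsHermitian) (hPproj : P * P = P)
    (hsuppP : LinearMap.range P.mulVecLin = LinearMap.range ρ.mulVecLin)
    (hQ : Q.IsHermitian) (hQproj : Q * Q = Q)
    (hsuppQ : LinearMap.range Q.mulVecLin = LinearMap.range σ.mulVecLin) :
    sInf {x : ℝ | ∃ R, R.IsHermitian ∧ (R - tens P Q).PosSemidef ∧ x = opNorm (pt R)} ≤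
      (sInf {x : ℝ | ∃ R₁, R₁.IsHermitian ∧ (R₁ - P).PosSemidef ∧ x = opNorm (pt R₁)}) *
      (sInf {x : ℝ | ∃ R₂, R₂.IsHermitian ∧ (R₂ - Q).PosSemidef ∧ x = opNorm (pt R₂)}) ∧
    -Real.log (sInf {x : ℝ | ∃ R, R.IsHermitian ∧ (R - tens P Q).PosSemidef ∧
        x = opNorm (pt R)}) ≥
      -Real.log (sInf {x : ℝ | ∃ R₁, R₁.IsHermitian ∧ (R₁ - P).PosSemidef ∧
          x = opNorm (pt R₁)}) +
      -Real.log (sInf {x : ℝ | ∃ R₂, R₂.IsHermitian ∧ (R₂ - Q).PosSemidef ∧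
          x = opNorm (pt R₂)}) := by
  change sInf (dualValues (tens P Q)) ≤ sInf (dualValues P) * sInf (dualValues Q) ∧
    -Real.log (sInf (dualValues (tens P Q))) ≥
      -Real.log (sInf (dualValues P)) + -Real.log (sInf (dualValues Q))
  have hPpsd := hP.posSemidef_of_mul_self_eq hPproj
  have hQpsd := hQ.posSemidef_of_mul_self_eq hQproj
  have hPne := ne_zero_of_range_mulVecLin_eq hρtr hsuppP
  have hQne := ne_zero_of_range_mulVecLin_eq hσtr hsuppQ
  have hle := sInf_dualValues_tens_le hPpsd hQpsd
  refine ⟨hle, ?_⟩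
  have hpos := sInf_dualValues_pos (posSemidef_tens hPpsd hQpsd) (tens_ne_zero hPne hQne)
  have hlog := Real.log_le_log hpos hle
  rw [Real.log_mul (sInf_dualValues_pos hPpsd hPne).ne'
    (sInf_dualValues_pos hQpsd hQne).ne'] at hlog
  linarith

/-- sub-multiplicativity of the dual SDP for `M`: for the support
projections `P`, `Q` of states `ρ`, `σ`,
`min {‖R^{T_BB'}‖_∞ : R ≥ P ⊗ Q} ≤ min {‖R₁^{T_B}‖_∞ : R₁ ≥ P} · min {‖R₂^{T_B'}‖_∞ : R₂ ≥ Q}`;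
consequently `E_M(ρ ⊗ σ) ≥ E_M(ρ) + E_M(σ)`. -/
theorem statement6 {a b c d : ℕ}
    (ρ P : Matrix (Fin a × Fin b) (Fin a × Fin b) ℂ)
    (σ Q : Matrix (Fin c × Fin d) (Fin c × Fin d) ℂ)
    (hρ : ρ.PosSemidef) (hρtr : ρ.trace = 1)
    (hσ : σ.PosSemidef) (hσtr : σ.trace = 1)
    (hP : P.IsHermitian) (hPproj : P * P = P)
    (hsuppP : LinearMap.range P.mulVecLin = LinearMap.range ρ.mulVecLin)
    (hQ : Q.IsHermitian) (hQproj : Q * Q = Q)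
    (hsuppQ : LinearMap.range Q.mulVecLin = LinearMap.range σ.mulVecLin) :
    sInf {x : ℝ | ∃ R, R.IsHermitian ∧ (R - tens P Q).PosSemidef ∧ x = opNorm (pt R)} ≤
      (sInf {x : ℝ | ∃ R₁, R₁.IsHermitian ∧ (R₁ - P).PosSemidef ∧ x = opNorm (pt R₁)}) *
      (sInf {x : ℝ | ∃ R₂, R₂.IsHermitian ∧ (R₂ - Q).PosSemidef ∧ x = opNorm (pt R₂)}) ∧
    -Real.log (sInf {x : ℝ | ∃ R, R.IsHermitian ∧ (R - tens P Q).PosSemidef ∧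
        x = opNorm (pt R)}) ≥
      -Real.log (sInf {x : ℝ | ∃ R₁, R₁.IsHermitian ∧ (R₁ - P).PosSemidef ∧
          x = opNorm (pt R₁)}) +
      -Real.log (sInf {x : ℝ | ∃ R₂, R₂.IsHermitian ∧ (R₂ - Q).PosSemidef ∧
          x = opNorm (pt R₂)}) :=
  statement6_general ρ P σ Q hρtr hσtr hP hPproj hsuppP hQ hQproj hsuppQ
end

section
/- Conversely, if M(ρ) = 1, then there exists a PPT state σ with support contained in the support of ρ. Specifically, any optimal V for the SDP defining M(ρ) satisfies tr V ≥ tr(PV) = 1 and tr V ≤ tr|V^{T_B}| = 1, hence tr V = 1, V^{T_B} ≥ 0, and range(V) ⊆ range(ρ). -/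
open scoped Matrix ComplexOrder

/-!
Write `tr V - tr (P V) = tr (Q V)` with `Q = 1 - P`. For `V = B† B ≥ 0` this is
`tr ((B Q) (B Q)†) ≥ 0`, and it vanishes only if `B Q = 0`, i.e. `P V = V`. On the other
side, `tr V = tr V^{T_B}` is the sum of the eigenvalues of `V^{T_B}`, which is at most the sum
of their absolute values `‖V^{T_B}‖₁`, with equality only if all of them are nonnegative.
An optimal `V` squeezes `1 = tr (P V) ≤ tr V ≤ ‖V^{T_B}‖₁ = 1`, so both are equalities.
-/

section PartialTranspose

variable {α β : Type*}

lemma conjTranspose_pt (M : Matrix (α × β) (α × β) ℂ) : (pt M)ᴴ = pt Mᴴ := by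
  ext p q
  simp [pt, Matrix.conjTranspose_apply]

end PartialTranspose

namespace Matrix

variable {n : Type*} [Fintype n]

lemma range_mulVecLin_le_of_mul_eq {P V : Matrix n n ℂ} (h : P * V = V) :
    LinearMap.range V.mulVecLin ≤ LinearMap.range P.mulVecLin := by
  rw [← h, mulVecLin_mul]
  exact LinearMap.range_comp_le_range _ _

variable [DecidableEq n]

section TraceNorm

variable {A : Matrix n n ℂ}

lemma IsHermitian.traceNorm_eq (hA : A.IsHermitian) : traceNorm A = ∑ i, |hA.eigenvalues i| := by
  rw [traceNorm, dif_pos hA]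

lemma IsHermitian.re_trace_eq (hA : A.IsHermitian) : A.trace.re = ∑ i, hA.eigenvalues i := by
  simp [hA.trace_eq_sum_eigenvalues]

lemma IsHermitian.re_trace_le_traceNorm (hA : A.IsHermitian) : A.trace.re ≤ traceNorm A := by
  rw [hA.re_trace_eq, hA.traceNorm_eq]
  exact Finset.sum_le_sum fun i _ => le_abs_self _

lemma IsHermitian.posSemidef_of_traceNorm_le_re_trace (hA : A.IsHermitian)
    (h : traceNorm A ≤ A.trace.re) : A.PosSemidef := by
  rw [hA.re_trace_eq, hA.traceNorm_eq] at h
  have habs : ∀ i ∈ Finset.univ, hA.eigenvalues i = |hA.eigenvalues i| :=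
    (Finset.sum_eq_sum_iff_of_le fun i _ => le_abs_self _).mp
      (le_antisymm (Finset.sum_le_sum fun i _ => le_abs_self _) h)
  exact hA.posSemidef_iff_eigenvalues_nonneg.mpr fun i =>
    habs i (Finset.mem_univ i) ▸ abs_nonneg _

end TraceNorm

section Projection

open scoped MatrixOrder

variable {P V : Matrix n n ℂ}

lemma trace_sub_trace_mul_eq (hP : IsStarProjection P) (B : Matrix n n ℂ) :
    (Bᴴ * B).trace - (P * (Bᴴ * B)).trace = (B * (1 - P) * (B * (1 - P))ᴴ).trace := by
  have hQ := hP.one_sub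
  rw [conjTranspose_mul, show (1 - P)ᴴ = 1 - P from hQ.isSelfAdjoint, Matrix.mul_assoc,
    ← Matrix.mul_assoc (1 - P), hQ.isIdempotentElem.eq, trace_mul_comm B, Matrix.mul_assoc,
    Matrix.sub_mul, Matrix.one_mul, trace_sub]

lemma PosSemidef.re_trace_mul_le (hV : V.PosSemidef) (hP : IsStarProjection P) :
    (P * V).trace.re ≤ V.trace.re := by
  obtain ⟨B, rfl⟩ := CStarAlgebra.nonneg_iff_eq_star_mul_self.mp hV.nonneg
  have h := (posSemidef_self_mul_conjTranspose (B * (1 - P))).trace_nonneg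
  rw [← trace_sub_trace_mul_eq hP] at h
  exact sub_nonneg.mp (Complex.nonneg_iff.mp h).1

lemma PosSemidef.mul_eq_self_of_re_trace_mul_eq (hV : V.PosSemidef) (hP : IsStarProjection P)
    (h : (P * V).trace.re = V.trace.re) : P * V = V := by
  obtain ⟨B, rfl⟩ := CStarAlgebra.nonneg_iff_eq_star_mul_self.mp hV.nonneg
  have hBQ : B * (1 - P) = 0 := by
    have h0 := (posSemidef_self_mul_conjTranspose (B * (1 - P))).trace_nonneg
    rw [← trace_sub_trace_mul_eq hP] at h0
    rw [← trace_mul_conjTranspose_self_eq_zero_iff, ← trace_sub_trace_mul_eq hP]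
    refine Complex.ext ?_ (Complex.nonneg_iff.mp h0).2.symm
    rw [Complex.sub_re, Complex.zero_re, sub_eq_zero]
    exact h.symm
  calc P * (Bᴴ * B) = Bᴴ * B - (B * (1 - P))ᴴ * B := by
        rw [conjTranspose_mul, show (1 - P)ᴴ = 1 - P from hP.one_sub.isSelfAdjoint,
          Matrix.mul_assoc, Matrix.sub_mul, Matrix.one_mul, sub_sub_cancel]
    _ = Bᴴ * B := by rw [hBQ, conjTranspose_zero, Matrix.zero_mul, sub_zero]

end Projection

end Matrix

theorem statement9_general {a b : ℕ}
    (ρ P : Matrix (Fin a × Fin b) (Fin a × Fin b) ℂ)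
    (hP : P.IsHermitian) (hPproj : P * P = P)
    (hsupp : LinearMap.range P.mulVecLin = LinearMap.range ρ.mulVecLin)
    (V : Matrix (Fin a × Fin b) (Fin a × Fin b) ℂ)
    (hV : V.PosSemidef) (hVtn : traceNorm (pt V) = 1)
    (hVopt : ((P * V).trace).re = 1) :
    V.trace = 1 ∧ (pt V).PosSemidef ∧
    LinearMap.range V.mulVecLin ≤ LinearMap.range ρ.mulVecLin := by
  have hPstar : IsStarProjection P := ⟨hPproj, hP⟩
  have hptV := hV.isHermitian.pt
  have hle_tr : (P * V).trace.re ≤ V.trace.re := hV.re_trace_mul_le hPstar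
  have htr_le : V.trace.re ≤ traceNorm (pt V) := trace_pt V ▸ hptV.re_trace_le_traceNorm
  have htr : V.trace.re = 1 := by linarith
  refine ⟨Complex.ext htr (Complex.nonneg_iff.mp hV.trace_nonneg).2.symm, ?_, ?_⟩
  · exact hptV.posSemidef_of_traceNorm_le_re_trace (by rw [trace_pt]; linarith)
  · exact hsupp ▸ Matrix.range_mulVecLin_le_of_mul_eq
      (hV.mul_eq_self_of_re_trace_mul_eq hPstar (by linarith))

/-- conversely, if `M(ρ) = 1` then any optimal `V` for the SDP
defining `M(ρ)` is a PPT state with support contained in the support of `ρ`: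
`tr V = 1`, `V^{T_B} ≥ 0` and `range V ⊆ range ρ`.  In particular such a PPT
state exists once optimality is attained. -/
theorem statement9 {a b : ℕ}
    (ρ P : Matrix (Fin a × Fin b) (Fin a × Fin b) ℂ)
    (hρ : ρ.PosSemidef) (hρtr : ρ.trace = 1)
    (hP : P.IsHermitian) (hPproj : P * P = P)
    (hsupp : LinearMap.range P.mulVecLin = LinearMap.range ρ.mulVecLin)
    (hM : sSup {x : ℝ | ∃ V, V.PosSemidef ∧ traceNorm (pt V) = 1 ∧
        x = ((P * V).trace).re} = 1)
    (V : Matrix (Fin a × Fin b) (Fin a × Fin b) ℂ)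
    (hV : V.PosSemidef) (hVtn : traceNorm (pt V) = 1)
    (hVopt : ((P * V).trace).re = 1) :
    V.trace = 1 ∧ (pt V).PosSemidef ∧
    LinearMap.range V.mulVecLin ≤ LinearMap.range ρ.mulVecLin :=
  statement9_general ρ P hP hPproj hsupp V hV hVtn hVopt
end

section
/- Let P be the support projection of ρ. If the top eigenvector |ψ⟩ of P^{T_B} (with eigenvalue ‖P^{T_B}‖_∞, assumed positive) is a product state |a⟩⊗|b⟩, then M(ρ) ≥ ‖P^{T_B}‖_∞; if additionally W₀(ρ) = ‖P^{T_B}‖_∞, then, since W₀(ρ) ≥ M(ρ), M(ρ) = ‖P^{T_B}‖_∞. -/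
open scoped Matrix ComplexOrder

section Helpers

variable {n : Type*} [Fintype n] [DecidableEq n]

lemma opNorm_of_herm {M : Matrix n n ℂ} (h : M.IsHermitian) :
    opNorm M = ⨆ i, |h.eigenvalues i| := by
  rw [opNorm, dif_pos h]

lemma traceNorm_of_herm {M : Matrix n n ℂ} (h : M.IsHermitian) :
    traceNorm M = ∑ i, |h.eigenvalues i| := by
  rw [traceNorm, dif_pos h]

lemma abs_eigenvalue_le {M : Matrix n n ℂ} (h : M.IsHermitian) (i : n) :
    |h.eigenvalues i| ≤ opNorm M := by
  rw [opNorm_of_herm h]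
  exact le_ciSup (f := fun j => |h.eigenvalues j|) (Set.Finite.bddAbove (Set.finite_range _)) i

lemma sum_eigenvalues_eq_trace {M : Matrix n n ℂ} (h : M.IsHermitian) :
    (∑ i, (h.eigenvalues i : ℂ)) = M.trace := by
  conv_rhs => rw [h.spectral_theorem, Unitary.conjStarAlgAut_apply]
  rw [Matrix.trace_mul_cycle]
  rw [show (star (h.eigenvectorUnitary : Matrix n n ℂ)) * (h.eigenvectorUnitary : Matrix n n ℂ)
      = 1 from Unitary.coe_star_mul_self _, Matrix.one_mul, Matrix.trace_diagonal]
  rfl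

lemma quad_le {A : Matrix n n ℂ} (hA : A.IsHermitian) (x : n → ℂ) :
    ‖dotProduct (star x) (A *ᵥ x)‖ ≤
      opNorm A * (dotProduct (star x) x).re := by
  set U : Matrix n n ℂ := (hA.eigenvectorUnitary : Matrix n n ℂ) with hU
  set y : n → ℂ := (star U) *ᵥ x with hy
  have hyx : star y = star x ᵥ* U := by
    rw [hy, Matrix.star_mulVec, Matrix.star_eq_conjTranspose, Matrix.conjTranspose_conjTranspose]
  have key1 : dotProduct (star x) (A *ᵥ x)
      = ∑ i, (hA.eigenvalues i : ℂ) * (star (y i) * y i) := by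
    conv_lhs => rw [hA.spectral_theorem, Unitary.conjStarAlgAut_apply]
    rw [← Matrix.mulVec_mulVec, ← Matrix.mulVec_mulVec, Matrix.dotProduct_mulVec, ← hyx, ← hy]
    simp only [dotProduct, Matrix.mulVec_diagonal, Function.comp_apply, Pi.star_apply]
    refine Finset.sum_congr rfl (fun i _ => ?_)
    rw [show (RCLike.ofReal (hA.eigenvalues i) : ℂ) = ((hA.eigenvalues i : ℝ) : ℂ) from rfl]
    ring
  have key2 : dotProduct (star y) y = dotProduct (star x) x := by
    rw [hyx, ← Matrix.dotProduct_mulVec, Matrix.mulVec_mulVec,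
      show U * star U = 1 from Unitary.coe_mul_star_self _, Matrix.one_mulVec]
  have hnsq : ∀ i : n, star (y i) * y i = ((Complex.normSq (y i) : ℝ) : ℂ) := by
    intro i
    rw [show star (y i) = (starRingEnd ℂ) (y i) from rfl, mul_comm, Complex.mul_conj]
  calc ‖dotProduct (star x) (A *ᵥ x)‖
      ≤ ∑ i, ‖(hA.eigenvalues i : ℂ) * (star (y i) * y i)‖ := by
        rw [key1]; exact norm_sum_le _ _
    _ ≤ ∑ i, opNorm A * Complex.normSq (y i) := by
        refine Finset.sum_le_sum (fun i _ => ?_)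
        rw [hnsq i, norm_mul]
        have h1 : ‖((hA.eigenvalues i : ℂ))‖ = |hA.eigenvalues i| := by
          rw [Complex.norm_real, Real.norm_eq_abs]
        have h2 : ‖(((Complex.normSq (y i) : ℝ) : ℂ))‖ = Complex.normSq (y i) := by
          rw [Complex.norm_real, Real.norm_eq_abs, abs_of_nonneg (Complex.normSq_nonneg _)]
        rw [h1, h2]
        exact mul_le_mul_of_nonneg_right (abs_eigenvalue_le hA i) (Complex.normSq_nonneg _)
    _ = opNorm A * (dotProduct (star x) x).re := by
        rw [← Finset.mul_sum]
        congr 1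
        rw [← key2]
        simp only [dotProduct, Pi.star_apply, Complex.re_sum]
        refine Finset.sum_congr rfl (fun i _ => ?_)
        rw [hnsq i, Complex.ofReal_re]

lemma trace_mul_le {A W : Matrix n n ℂ} (hA : A.IsHermitian) (hW : W.IsHermitian) :
    ((A * W).trace).re ≤ opNorm A * traceNorm W := by
  set U : Matrix n n ℂ := (hW.eigenvectorUnitary : Matrix n n ℂ) with hU
  have h1 : (A * W).trace = ∑ i, ((star U * A * U) i i) * (hW.eigenvalues i : ℂ) := by
    conv_lhs => rw [hW.spectral_theorem, Unitary.conjStarAlgAut_apply]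
    rw [show A * (U * Matrix.diagonal (RCLike.ofReal ∘ hW.eigenvalues) * star U)
        = (A * U * Matrix.diagonal (RCLike.ofReal ∘ hW.eigenvalues)) * star U by
      simp only [Matrix.mul_assoc]]
    rw [Matrix.trace_mul_comm, ← Matrix.mul_assoc, ← Matrix.mul_assoc]
    simp only [Matrix.trace, Matrix.diag, Matrix.mul_diagonal, Function.comp_apply]
    rfl
  have h2 : ∀ i, ‖(star U * A * U) i i‖ ≤ opNorm A := by
    intro i
    set c : n → ℂ := fun j => U j i with hc
    have e1 : (star U * A * U) i i = dotProduct (star c) (A *ᵥ c) := by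
      simp only [Matrix.mul_apply, dotProduct, Matrix.mulVec, hc, Pi.star_apply,
        Matrix.star_apply, Matrix.star_eq_conjTranspose, Matrix.conjTranspose_apply,
        Finset.sum_mul, Finset.mul_sum]
      rw [Finset.sum_comm]
      refine Finset.sum_congr rfl (fun j _ => Finset.sum_congr rfl (fun k _ => by ring))
    have e2 : dotProduct (star c) c = 1 := by
      have : dotProduct (star c) c = (star U * U) i i := by
        simp only [Matrix.mul_apply, dotProduct, hc, Pi.star_apply,
          Matrix.star_apply, Matrix.star_eq_conjTranspose, Matrix.conjTranspose_apply]
      rw [this, show star U * U = 1 from Unitary.coe_star_mul_self _, Matrix.one_apply_eq]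
    have h3 := quad_le hA c
    rw [e2] at h3
    rw [e1]
    simpa using h3
  calc ((A * W).trace).re ≤ ‖(A * W).trace‖ := Complex.re_le_norm _
    _ ≤ ∑ i, ‖((star U * A * U) i i) * (hW.eigenvalues i : ℂ)‖ := by
        rw [h1]; exact norm_sum_le _ _
    _ ≤ ∑ i, opNorm A * |hW.eigenvalues i| := by
        refine Finset.sum_le_sum (fun i _ => ?_)
        rw [norm_mul, Complex.norm_real, Real.norm_eq_abs]
        exact mul_le_mul_of_nonneg_right (h2 i) (abs_nonneg _)
    _ = opNorm A * traceNorm W := by rw [← Finset.mul_sum, traceNorm_of_herm hW]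

lemma traceNorm_psd {M : Matrix n n ℂ} (h : M.PosSemidef) : traceNorm M = M.trace.re := by
  rw [traceNorm_of_herm h.1]
  have h2 : ∀ i, |h.1.eigenvalues i| = h.1.eigenvalues i :=
    fun i => abs_of_nonneg (h.eigenvalues_nonneg i)
  simp_rw [h2]
  rw [← sum_eigenvalues_eq_trace h.1]
  simp [Complex.re_sum]

/-- Rank-one outer product `|x⟩⟨x|`. -/
def outer (x : n → ℂ) : Matrix n n ℂ := fun i j => x i * star (x j)

lemma outer_posSemidef (x : n → ℂ) : (outer x).PosSemidef := by
  refine Matrix.posSemidef_iff_dotProduct_mulVec.mpr ⟨?_, ?_⟩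
  · ext i j
    simp only [Matrix.conjTranspose_apply, outer, star_mul', star_star]
    exact mul_comm _ _
  · intro y
    have key : dotProduct (star y) (outer x *ᵥ y) =
        star (dotProduct (star x) y) * (dotProduct (star x) y) := by
      simp only [dotProduct, Matrix.mulVec, outer, Pi.star_apply,
        Finset.mul_sum, Finset.sum_mul, star_sum, star_mul', star_star]
      rw [Finset.sum_comm]
      refine Finset.sum_congr rfl (fun i _ => Finset.sum_congr rfl (fun j _ => by ring))
    rw [key]
    exact star_mul_self_nonneg _

lemma trace_mul_outer (M : Matrix n n ℂ) (x : n → ℂ) :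
    (M * outer x).trace = dotProduct (star x) (M *ᵥ x) := by
  simp only [Matrix.trace, Matrix.diag, Matrix.mul_apply, outer, dotProduct,
    Matrix.mulVec, Pi.star_apply, Finset.mul_sum]
  refine Finset.sum_congr rfl (fun p _ => Finset.sum_congr rfl (fun q _ => by ring))

lemma trace_outer_self (x : n → ℂ) : (outer x).trace = dotProduct (star x) x := by
  simp only [Matrix.trace, Matrix.diag, outer, dotProduct, Pi.star_apply]
  exact Finset.sum_congr rfl (fun p _ => mul_comm _ _)

end Helpers

section PT

variable {a b : ℕ}

lemma pt_pt_s13 (M : Matrix (Fin a × Fin b) (Fin a × Fin b) ℂ) : pt (pt M) = M := rfl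

lemma pt_isHermitian {M : Matrix (Fin a × Fin b) (Fin a × Fin b) ℂ}
    (h : M.IsHermitian) : (pt M).IsHermitian := by
  ext p q
  rw [Matrix.conjTranspose_apply]
  show star (M (q.1, p.2) (p.1, q.2)) = M (p.1, q.2) (q.1, p.2)
  conv_rhs => rw [← h]
  rw [Matrix.conjTranspose_apply]

lemma trace_pt_mul_pt (A B : Matrix (Fin a × Fin b) (Fin a × Fin b) ℂ) :
    ((pt A) * (pt B)).trace = (A * B).trace := by
  have expand : ∀ (M N : Matrix (Fin a × Fin b) (Fin a × Fin b) ℂ),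
      (M * N).trace = ∑ x : (Fin a × Fin b) × (Fin a × Fin b), M x.1 x.2 * N x.2 x.1 := by
    intro M N
    conv_rhs => rw [← Finset.univ_product_univ, Finset.sum_product]
    simp [Matrix.trace, Matrix.diag, Matrix.mul_apply]
  rw [expand, expand]
  apply Fintype.sum_equiv
    ⟨fun x => ((x.1.1, x.2.2), (x.2.1, x.1.2)), fun x => ((x.1.1, x.2.2), (x.2.1, x.1.2)),
      fun x => rfl, fun x => rfl⟩
  intro x
  rfl

end PT

/-- if the top eigenvector `ψ` of `P^{T_B}` (eigenvalue
`‖P^{T_B}‖_∞ > 0`) is a unit product vector `a ⊗ b`, then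
`M(ρ) ≥ ‖P^{T_B}‖_∞` (where `P` is the support projection of `ρ`); and if
moreover `W₀(ρ) = min {‖R^{T_B}‖_∞ : P ≤ R ≤ I}` equals `‖P^{T_B}‖_∞`, then
`M(ρ) = ‖P^{T_B}‖_∞`. -/
theorem statement13 {a b : ℕ}
    (ρ P : Matrix (Fin a × Fin b) (Fin a × Fin b) ℂ)
    (hρ : ρ.PosSemidef) (hρtr : ρ.trace = 1)
    (hP : P.IsHermitian) (hPproj : P * P = P)
    (hsupp : LinearMap.range P.mulVecLin = LinearMap.range ρ.mulVecLin)
    (u : Fin a → ℂ) (v : Fin b → ℂ) (ψ : (Fin a × Fin b) → ℂ)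
    (hprod : ψ = fun p => u p.1 * v p.2)
    (hunit : dotProduct (star ψ) ψ = 1)
    (heig : (pt P) *ᵥ ψ = ((opNorm (pt P) : ℝ) : ℂ) • ψ)
    (hpos : 0 < opNorm (pt P)) :
    sSup {x : ℝ | ∃ V, V.PosSemidef ∧ traceNorm (pt V) = 1 ∧
        x = ((P * V).trace).re} ≥ opNorm (pt P) ∧
    (sInf {x : ℝ | ∃ R, R.IsHermitian ∧ (R - P).PosSemidef ∧
          (1 - R).PosSemidef ∧ x = opNorm (pt R)} = opNorm (pt P) →
      sSup {x : ℝ | ∃ V, V.PosSemidef ∧ traceNorm (pt V) = 1 ∧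
        x = ((P * V).trace).re} = opNorm (pt P)) := by
  set L : ℝ := opNorm (pt P) with hL
  set S : Set ℝ := {x : ℝ | ∃ V, V.PosSemidef ∧ traceNorm (pt V) = 1 ∧
      x = ((P * V).trace).re} with hS
  have hptP : (pt P).IsHermitian := pt_isHermitian hP
  -- the witness
  set φ : (Fin a × Fin b) → ℂ := fun p => u p.1 * star (v p.2) with hφ
  have hpto : pt (outer ψ) = outer φ := by
    funext p q
    simp only [pt, outer, hprod, hφ, star_mul', star_star]
    ring
  have hptV : pt (outer φ) = outer ψ := by rw [← hpto, pt_pt_s13]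
  have htn : traceNorm (pt (outer φ)) = 1 := by
    rw [hptV, traceNorm_psd (outer_posSemidef ψ), trace_outer_self, hunit]
    rfl
  have hval : ((P * outer φ).trace) = ((L : ℝ) : ℂ) := by
    rw [← trace_pt_mul_pt P (outer φ), hptV, trace_mul_outer, heig,
      dotProduct_smul, hunit]
    simp
  have hmem : L ∈ S := by
    refine ⟨outer φ, outer_posSemidef φ, htn, ?_⟩
    rw [hval, Complex.ofReal_re]
  have hbound : ∀ x ∈ S, x ≤ L := by
    rintro x ⟨V, hV, htnV, rfl⟩
    have hptVh : (pt V).IsHermitian := pt_isHermitian hV.1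
    rw [← trace_pt_mul_pt P V]
    calc ((pt P * pt V).trace).re ≤ opNorm (pt P) * traceNorm (pt V) :=
          trace_mul_le hptP hptVh
      _ = L := by rw [htnV, mul_one]
  have hge : sSup S ≥ L := le_csSup ⟨L, hbound⟩ hmem
  exact ⟨hge, fun _ => le_antisymm (csSup_le ⟨L, hmem⟩ hbound) hge⟩
end

section
/- For the two-qubit state σ_r above with (5-√17)/16 < r < (5+√17)/16, the partial transpose σ_r^{T_B} equals (1/4)|00⟩⟨00| + (1/8)|11⟩⟨11| + r|01⟩⟨01| + (5/8-r)|10⟩⟨10| + (1/(4√2))(|00⟩⟨11| + |11⟩⟨00|), and σ_r^{T_B} ≥ 0; thus σ_r is a PPT state. -/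
open scoped Matrix ComplexOrder

/-- The two-qubit matrix `σ_r` from the paper:
`σ_r = (1/4)|00⟩⟨00| + (1/8)|11⟩⟨11| + r|01⟩⟨01| + (5/8-r)|10⟩⟨10|
      + (1/(4√2))(|01⟩⟨10| + |10⟩⟨01|)`. -/
noncomputable def sigmaR (r : ℝ) : Matrix (Fin 2 × Fin 2) (Fin 2 × Fin 2) ℂ :=
  fun p q =>
    if p = (0, 0) ∧ q = (0, 0) then 1 / 4
    else if p = (1, 1) ∧ q = (1, 1) then 1 / 8
    else if p = (0, 1) ∧ q = (0, 1) then ((r : ℝ) : ℂ)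
    else if p = (1, 0) ∧ q = (1, 0) then ((5 / 8 - r : ℝ) : ℂ)
    else if p = (0, 1) ∧ q = (1, 0) then ((1 / (4 * Real.sqrt 2) : ℝ) : ℂ)
    else if p = (1, 0) ∧ q = (0, 1) then ((1 / (4 * Real.sqrt 2) : ℝ) : ℂ)
    else 0

noncomputable def ptSigmaRVec : Fin 2 × Fin 2 → ℂ :=
  Pi.single (0, 0) (1 / 2) + Pi.single (1, 1) ((1 / (2 * Real.sqrt 2) : ℝ) : ℂ)

noncomputable def ptSigmaRWeights (r : ℝ) : Fin 2 × Fin 2 → ℂ :=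
  Pi.single (0, 1) (r : ℂ) + Pi.single (1, 0) ((5 / 8 - r : ℝ) : ℂ)

/-- On `span{|00⟩, |11⟩}` the partial transpose is the rank-one `|ψ⟩⟨ψ|` with
`ψ = (1/2)|00⟩ + (1/(2√2))|11⟩` (its determinant `(1/4)(1/8) - 1/32` vanishes);
the rest is diagonal. -/
lemma pt_sigmaR_eq_vecMulVec_add_diagonal (r : ℝ) :
    pt (sigmaR r) =
      Matrix.vecMulVec ptSigmaRVec (star ptSigmaRVec) + Matrix.diagonal (ptSigmaRWeights r) := by
  have hsqrt : (Real.sqrt 2 : ℂ) ^ 2 = 2 := by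
    rw [← Complex.ofReal_pow, Real.sq_sqrt zero_le_two]; norm_num
  ext ⟨i, j⟩ ⟨k, l⟩
  fin_cases i <;> fin_cases j <;> fin_cases k <;> fin_cases l <;>
    simp [pt, sigmaR, ptSigmaRVec, ptSigmaRWeights, Matrix.vecMulVec_apply]
  all_goals field_simp; norm_num [hsqrt]

lemma ptSigmaRWeights_nonneg {r : ℝ} (h0 : 0 ≤ r) (h1 : r ≤ 5 / 8) : 0 ≤ ptSigmaRWeights r := by
  intro p
  have h1' : (r : ℂ) ≤ 5 / 8 := by simpa using Complex.real_le_real.mpr h1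
  fin_cases p <;> simp [ptSigmaRWeights, h0, h1']

lemma posSemidef_pt_sigmaR {r : ℝ} (h0 : 0 ≤ r) (h1 : r ≤ 5 / 8) : (pt (sigmaR r)).PosSemidef := by
  rw [pt_sigmaR_eq_vecMulVec_add_diagonal]
  exact (Matrix.posSemidef_vecMulVec_self_star _).add
    (Matrix.PosSemidef.diagonal (ptSigmaRWeights_nonneg h0 h1))

/-- for `(5-√17)/16 < r < (5+√17)/16`, the partial transpose of
`σ_r` is `(1/4)|00⟩⟨00| + (1/8)|11⟩⟨11| + r|01⟩⟨01| + (5/8-r)|10⟩⟨10|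
+ (1/(4√2))(|00⟩⟨11| + |11⟩⟨00|)`, and it is positive semidefinite, so `σ_r`
is a PPT state. -/
theorem statement16 (r : ℝ)
    (hlo : (5 - Real.sqrt 17) / 16 < r) (hhi : r < (5 + Real.sqrt 17) / 16) :
    pt (sigmaR r) =
      (fun p q =>
        if p = (0, 0) ∧ q = (0, 0) then 1 / 4
        else if p = (1, 1) ∧ q = (1, 1) then 1 / 8
        else if p = (0, 1) ∧ q = (0, 1) then ((r : ℝ) : ℂ)
        else if p = (1, 0) ∧ q = (1, 0) then ((5 / 8 - r : ℝ) : ℂ)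
        else if p = (0, 0) ∧ q = (1, 1) then ((1 / (4 * Real.sqrt 2) : ℝ) : ℂ)
        else if p = (1, 1) ∧ q = (0, 0) then ((1 / (4 * Real.sqrt 2) : ℝ) : ℂ)
        else 0 : Matrix (Fin 2 × Fin 2) (Fin 2 × Fin 2) ℂ) ∧
    (pt (sigmaR r)).PosSemidef := by
  have hsqrt17 : Real.sqrt 17 < 5 := by
    rw [Real.sqrt_lt' (by norm_num)]; norm_num
  refine ⟨?_, posSemidef_pt_sigmaR (by linarith [Real.sqrt_nonneg 17]) (by linarith)⟩
  ext ⟨i, j⟩ ⟨k, l⟩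
  fin_cases i <;> fin_cases j <;> fin_cases k <;> fin_cases l <;> simp [pt, sigmaR]
end

section
/- For the 3⊗3 states ρ^(α) with support projection P_α = Σ_{m=0}^{2} U^m |ψ₀⟩⟨ψ₀| (U†)^m where U = X† ⊗ X, X = Σ_j |j⊕1⟩⟨j| (indices mod 3), and |ψ₀⟩ = √α|00⟩ + √(1-α)|11⟩ with 0 < α ≤ 1/5: the partial transpose P_α^{T_B} has operator norm ‖P_α^{T_B}‖_∞ = 1 - α, attained at the product eigenvector |11⟩. -/
open scoped Matrix ComplexOrder

/-- The cyclic shift `X = ∑_j |j⊕1⟩⟨j|` on `ℂ³`. -/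
def shiftX : Matrix (Fin 3) (Fin 3) ℂ := fun i j => if i = j + 1 then 1 else 0

/-- `U = X† ⊗ X` on `ℂ³ ⊗ ℂ³`. -/
def Umat : Matrix (Fin 3 × Fin 3) (Fin 3 × Fin 3) ℂ :=
  fun p q => shiftXᴴ p.1 q.1 * shiftX p.2 q.2

/-- `|ψ₀⟩ = √α |00⟩ + √(1-α) |11⟩`. -/
noncomputable def psi0 (α : ℝ) : (Fin 3 × Fin 3) → ℂ :=
  fun p => if p = (0, 0) then ((Real.sqrt α : ℝ) : ℂ)
    else if p = (1, 1) then ((Real.sqrt (1 - α) : ℝ) : ℂ) else 0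

/-- The support projection `P_α = ∑_{m=0}^{2} U^m |ψ₀⟩⟨ψ₀| (U†)^m`
of the state `ρ^(α)`. -/
noncomputable def Palpha (α : ℝ) : Matrix (Fin 3 × Fin 3) (Fin 3 × Fin 3) ℂ :=
  ∑ m ∈ Finset.range 3,
    Umat ^ m * Matrix.vecMulVec (psi0 α) (star (psi0 α)) * (Umat ^ m)ᴴ

/-- The basis vector `|11⟩` of `ℂ³ ⊗ ℂ³`. -/
def e11 : (Fin 3 × Fin 3) → ℂ := fun p => if p = (1, 1) then 1 else 0

/-!
After the partial transpose, `P_α` is diagonal on the product vectors `U^m|00⟩` and `U^m|11⟩`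
(eigenvalues `α` and `1 - α`) and acts on `span {|01⟩, |10⟩, |22⟩}` as `√(α(1-α)) (J - 1)`,
`J` the all-ones matrix, with eigenvalues `2√(α(1-α))` and `-√(α(1-α))`. For `α ≤ 1/5` all of
these lie in `[-(1-α), 1-α]`; this is certified by writing `(1-α) ± P_α^{T_B}` as nonnegative
combinations of rank-one projections, and `|11⟩` attains the bound.
-/

open Matrix

namespace Matrix.IsHermitian

variable {n : Type*} [Fintype n] [DecidableEq n] {A : Matrix n n ℂ}

theorem exists_eigenvalues_eq_of_mulVec_eq (hA : A.IsHermitian) {c : ℝ} {v : n → ℂ}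
    (hv : v ≠ 0) (hAv : A *ᵥ v = (c : ℂ) • v) : ∃ i, hA.eigenvalues i = c := by
  rw [← Set.mem_range, ← hA.spectrum_real_eq_range_eigenvalues, spectrum.mem_iff,
    isUnit_iff_isUnit_det, isUnit_iff_ne_zero, not_not, ← exists_mulVec_eq_zero_iff]
  exact ⟨v, hv, by simp [sub_mulVec, hAv, Algebra.algebraMap_eq_smul_one, smul_mulVec]⟩

theorem abs_eigenvalues_le (hA : A.IsHermitian) {c : ℝ} (hsub : ((c : ℂ) • 1 - A).PosSemidef)
    (hadd : ((c : ℂ) • 1 + A).PosSemidef) (i : n) : |hA.eigenvalues i| ≤ c := by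
  set v := ⇑(hA.eigenvectorBasis i)
  have hvv : star v ⬝ᵥ v = 1 := by
    have h := inner_self_eq_norm_sq_to_K (𝕜 := ℂ) (hA.eigenvectorBasis i)
    rw [EuclideanSpace.inner_eq_star_dotProduct, hA.eigenvectorBasis.orthonormal.1 i] at h
    simpa [dotProduct_comm] using h
  have hquad : ∀ B : Matrix n n ℂ,
      RCLike.re (star v ⬝ᵥ (((c : ℂ) • 1 + B) *ᵥ v)) = c + RCLike.re (star v ⬝ᵥ (B *ᵥ v)) := by
    intro B
    simp [add_mulVec, smul_mulVec, hvv]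
  have h₁ := hsub.re_dotProduct_nonneg v
  have h₂ := hadd.re_dotProduct_nonneg v
  rw [sub_eq_add_neg, hquad, neg_mulVec, dotProduct_neg, map_neg] at h₁
  rw [hquad] at h₂
  rw [abs_le, hA.eigenvalues_eq]
  constructor <;> linarith

end Matrix.IsHermitian

theorem opNorm_eq_of_mulVec_eq {n : Type*} [Fintype n] [DecidableEq n] {A : Matrix n n ℂ}
    {c : ℝ} (hsub : ((c : ℂ) • 1 - A).PosSemidef) (hadd : ((c : ℂ) • 1 + A).PosSemidef)
    {v : n → ℂ} (hv : v ≠ 0) (hAv : A *ᵥ v = (c : ℂ) • v) : opNorm A = c := by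
  have hA : A.IsHermitian := by
    simpa using (isHermitian_one.smul (Complex.conj_ofReal c)).sub hsub.isHermitian
  obtain ⟨i, hi⟩ := hA.exists_eigenvalues_eq_of_mulVec_eq hv hAv
  have : Nonempty n := ⟨i⟩
  rw [opNorm, dif_pos hA]
  refine le_antisymm (ciSup_le (hA.abs_eigenvalues_le hsub hadd)) ?_
  calc c ≤ |hA.eigenvalues i| := hi ▸ le_abs_self _
    _ ≤ ⨆ j, |hA.eigenvalues j| :=
      le_ciSup (Set.finite_range fun j ↦ |hA.eigenvalues j|).bddAbove i

noncomputable def ketbra {n : Type*} (x : n → ℂ) : Matrix n n ℂ := vecMulVec x (star x)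

section ketbra

variable {n : Type*} [Fintype n]

theorem mul_ketbra_mul_conjTranspose (A : Matrix n n ℂ) (x : n → ℂ) :
    A * ketbra x * Aᴴ = ketbra (A *ᵥ x) := by
  rw [ketbra, ketbra, mul_vecMulVec, vecMulVec_mul, star_mulVec]

theorem posSemidef_smul_ketbra {r : ℝ} (hr : 0 ≤ r) (x : n → ℂ) :
    ((r : ℂ) • ketbra x).PosSemidef :=
  (posSemidef_vecMulVec_self_star x).smul (Complex.zero_le_real.mpr hr)

theorem posSemidef_smul_sum_ketbra {ι : Type*} [Fintype ι] {r : ℝ} (hr : 0 ≤ r)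
    (x : ι → n → ℂ) : ((r : ℂ) • ∑ i, ketbra (x i)).PosSemidef :=
  (posSemidef_sum _ fun i _ ↦ posSemidef_vecMulVec_self_star (x i)).smul
    (Complex.zero_le_real.mpr hr)

end ketbra

def ket (i j : Fin 3) : Fin 3 × Fin 3 → ℂ := fun p => if p = (i, j) then 1 else 0

theorem ket_ne_zero (i j : Fin 3) : ket i j ≠ 0 := fun h ↦ by
  simpa [ket] using congr_fun h (i, j)

theorem Umat_mulVec_ket (i j : Fin 3) : Umat *ᵥ ket i j = ket (i - 1) (j + 1) := by
  ext ⟨k, l⟩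
  simp [mulVec, dotProduct, Umat, shiftX, ket, conjTranspose_apply, eq_sub_iff_add_eq, eq_comm,
    ite_and]
  split_ifs <;> rfl

open Fin.NatCast in
theorem Umat_pow_mulVec_ket (m : ℕ) (i j : Fin 3) :
    Umat ^ m *ᵥ ket i j = ket (i - (m : Fin 3)) (j + (m : Fin 3)) := by
  induction m generalizing i j with
  | zero => simp
  | succ m ih =>
    rw [pow_succ, ← mulVec_mulVec, Umat_mulVec_ket, ih]
    push_cast
    rw [sub_sub, add_assoc, add_comm 1 (m : Fin 3)]

theorem psi0_eq (α : ℝ) : psi0 α = (√α : ℂ) • ket 0 0 + (√(1 - α) : ℂ) • ket 1 1 := by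
  ext p
  by_cases h : p = (0, 0) <;> simp [psi0, ket, h]

/-- `P_α` with `√α, √(1-α)` replaced by `a, b`, using `U^m |ij⟩ = |i-m, j+m⟩`. -/
noncomputable def supportProj (a b : ℝ) : Matrix (Fin 3 × Fin 3) (Fin 3 × Fin 3) ℂ :=
  ∑ m : Fin 3, ketbra ((a : ℂ) • ket (-m) m + (b : ℂ) • ket (1 - m) (1 + m))

open Fin.NatCast in
theorem Palpha_eq_supportProj (α : ℝ) : Palpha α = supportProj √α √(1 - α) := by
  rw [Palpha, supportProj, ← Fin.sum_univ_eq_sum_range]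
  refine Finset.sum_congr rfl fun m _ ↦ ?_
  rw [← ketbra, mul_ketbra_mul_conjTranspose, psi0_eq, mulVec_add, mulVec_smul, mulVec_smul,
    Umat_pow_mulVec_ket, Umat_pow_mulVec_ket]
  simp

theorem pt_supportProj_mulVec_e11 (a b : ℝ) :
    pt (supportProj a b) *ᵥ e11 = ((b ^ 2 : ℝ) : ℂ) • e11 := by
  ext ⟨k, l⟩
  fin_cases k <;> fin_cases l <;>
    simp [pt, supportProj, ketbra, mulVec, dotProduct, Fin.sum_univ_three,
      vecMulVec_apply, ket, e11, sq, show (-1 : Fin 3) = 2 from rfl,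
      show (-2 : Fin 3) = 1 from rfl]

set_option maxHeartbeats 1000000 in
theorem smul_one_sub_pt_supportProj (a b : ℝ) :
    ((b ^ 2 : ℝ) : ℂ) • 1 - pt (supportProj a b) =
      ((b ^ 2 - a ^ 2 : ℝ) : ℂ) • ∑ m : Fin 3, ketbra (ket (-m) m)
      + ((b ^ 2 - 2 * a * b : ℝ) : ℂ) • ∑ m : Fin 3, ketbra (ket (1 - m) m)
      + ((a * b : ℝ) : ℂ) • ∑ m : Fin 3, ketbra (ket (1 - m) m - ket (-m) (m + 1)) := by
  simp only [supportProj, Fin.sum_univ_three, show (-1 : Fin 3) = 2 from rfl,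
    show (-2 : Fin 3) = 1 from rfl, neg_zero, Fin.reduceSub, Fin.reduceAdd]
  ext ⟨i, j⟩ ⟨k, l⟩
  fin_cases i <;> fin_cases j <;> fin_cases k <;> fin_cases l <;>
    (simp [pt, ketbra, one_apply, vecMulVec_apply, ket] <;> ring)

set_option maxHeartbeats 1000000 in
theorem smul_one_add_pt_supportProj (a b : ℝ) :
    ((b ^ 2 : ℝ) : ℂ) • 1 + pt (supportProj a b) =
      ((b ^ 2 + a ^ 2 : ℝ) : ℂ) • ∑ m : Fin 3, ketbra (ket (-m) m)
      + ((2 * b ^ 2 : ℝ) : ℂ) • ∑ m : Fin 3, ketbra (ket (1 - m) (1 + m))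
      + ((b ^ 2 - a * b : ℝ) : ℂ) • ∑ m : Fin 3, ketbra (ket (1 - m) m)
      + ((a * b : ℝ) : ℂ) • ketbra (∑ m : Fin 3, ket (1 - m) m) := by
  simp only [supportProj, Fin.sum_univ_three, show (-1 : Fin 3) = 2 from rfl,
    show (-2 : Fin 3) = 1 from rfl, neg_zero, Fin.reduceSub, Fin.reduceAdd]
  ext ⟨i, j⟩ ⟨k, l⟩
  fin_cases i <;> fin_cases j <;> fin_cases k <;> fin_cases l <;>
    (simp [pt, ketbra, one_apply, vecMulVec_apply, ket] <;> ring)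

theorem opNorm_pt_supportProj {a b : ℝ} (ha : 0 ≤ a) (hab : 2 * a ≤ b) :
    opNorm (pt (supportProj a b)) = b ^ 2 := by
  have hb : 0 ≤ b := by linarith
  refine opNorm_eq_of_mulVec_eq ?_ ?_ (ket_ne_zero 1 1) (pt_supportProj_mulVec_e11 a b)
  · rw [smul_one_sub_pt_supportProj]
    exact ((posSemidef_smul_sum_ketbra (by nlinarith) _).add
      (posSemidef_smul_sum_ketbra (by nlinarith) _)).add
      (posSemidef_smul_sum_ketbra (by positivity) _)
  · rw [smul_one_add_pt_supportProj]
    exact (((posSemidef_smul_sum_ketbra (by positivity) _).add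
      (posSemidef_smul_sum_ketbra (by positivity) _)).add
      (posSemidef_smul_sum_ketbra (by nlinarith) _)).add
      (posSemidef_smul_ketbra (by positivity) _)

theorem two_mul_sqrt_le_sqrt_one_sub {α : ℝ} (h : α ≤ 1 / 5) : 2 * √α ≤ √(1 - α) :=
  calc 2 * √α = √(2 ^ 2 * α) := by rw [Real.sqrt_mul (by positivity), Real.sqrt_sq zero_le_two]
    _ ≤ √(1 - α) := Real.sqrt_le_sqrt (by linarith)

theorem statement19_general (α : ℝ) (h5 : α ≤ 1 / 5) :
    opNorm (pt (Palpha α)) = 1 - α ∧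
    (pt (Palpha α)) *ᵥ e11 = ((1 - α : ℝ) : ℂ) • e11 := by
  have hb : √(1 - α) ^ 2 = 1 - α := Real.sq_sqrt (by linarith)
  rw [Palpha_eq_supportProj]
  constructor
  · rw [opNorm_pt_supportProj (Real.sqrt_nonneg α) (two_mul_sqrt_le_sqrt_one_sub h5), hb]
  · simpa only [hb] using pt_supportProj_mulVec_e11 √α √(1 - α)

/-- for `0 < α ≤ 1/5`, the partial transpose of `P_α` has
operator norm `1 - α`, attained at the product eigenvector `|11⟩`. -/
theorem statement19 (α : ℝ) (h0 : 0 < α) (h5 : α ≤ 1 / 5) :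
    opNorm (pt (Palpha α)) = 1 - α ∧
    (pt (Palpha α)) *ᵥ e11 = ((1 - α : ℝ) : ℂ) • e11 :=
  statement19_general α h5
end
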